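/- arXiv:2502.11039 — 3 statements merged into one kernel-verified Lean document; each statement's English description precedes it below -/
import Mathlib

section
/- Let λ₁ ≤ λ₂ ≤ λ₃ be real numbers with λ₁ + λ₂ + λ₃ = 0. Then √(λ₁² + λ₂² + λ₃²) ≤ √6 · λ₃, with equality if and only if λ₁ + 2λ₃ = 0 and λ₂ = λ₃. -/
theorem stmt_3 (l1 l2 l3 : ℝ) (h12 : l1 ≤ l2) (h23 : l2 ≤ l3)
    (hsum : l1 + l2 + l3 = 0) :
    Real.sqrt (l1 ^ 2 + l2 ^ 2 + l3 ^ 2) ≤ Real.sqrt 6 * l3 ∧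
      (Real.sqrt (l1 ^ 2 + l2 ^ 2 + l3 ^ 2) = Real.sqrt 6 * l3 ↔
        l1 + 2 * l3 = 0 ∧ l2 = l3) := by
  have hl3 : 0 ≤ l3 := by linarith
  have hS : 0 ≤ l1 ^ 2 + l2 ^ 2 + l3 ^ 2 := by positivity
  have hle : l1 ^ 2 + l2 ^ 2 + l3 ^ 2 ≤ 6 * l3 ^ 2 := by nlinarith [sq_nonneg (l3 - l2), sq_nonneg (l3 - l1)]
  have hsix : Real.sqrt (6 * l3 ^ 2) = Real.sqrt 6 * l3 := by
    rw [Real.sqrt_mul (by norm_num), Real.sqrt_sq hl3]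
  constructor
  · calc Real.sqrt (l1 ^ 2 + l2 ^ 2 + l3 ^ 2) ≤ Real.sqrt (6 * l3 ^ 2) :=
          Real.sqrt_le_sqrt hle
      _ = Real.sqrt 6 * l3 := hsix
  · constructor
    · intro h
      rw [← hsix] at h
      have hSeq : l1 ^ 2 + l2 ^ 2 + l3 ^ 2 = 6 * l3 ^ 2 := by
        have h6 : (0:ℝ) ≤ 6 * l3 ^ 2 := by positivity
        exact (Real.sqrt_inj hS h6).1 h
      have hprod : (l3 - l2) * (2 * l3 + l2) = 0 := by nlinarith
      rcases mul_eq_zero.1 hprod with h0 | h0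
      · constructor <;> linarith
      · have : l3 = 0 := by linarith
        constructor <;> linarith
    · rintro ⟨h1, h2⟩
      have : l1 ^ 2 + l2 ^ 2 + l3 ^ 2 = 6 * l3 ^ 2 := by nlinarith
      rw [this, hsix]
end

section
/- Let λ₁ ≤ λ₂ ≤ λ₃ be real numbers with λ₁ + λ₂ + λ₃ = 0, and suppose additionally that λ₂ ≤ −s/12 for some real number s ≥ 0 and s/12 ≤ λ₁ + λ₃. Then 2λ₂² + 4λ₁λ₃ − λ₂s/2 ≤ 0. -/
theorem stmt_5 (s l1 l2 l3 : ℝ) (h12 : l1 ≤ l2) (h23 : l2 ≤ l3)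
    (hsum : l1 + l2 + l3 = 0) (hs : s ≥ 0)
    (hl2 : l2 ≤ -s / 12) (hgap : s / 12 ≤ l1 + l3) :
    2 * l2 ^ 2 + 4 * l1 * l3 - l2 * s / 2 ≤ 0 := by
  nlinarith [sq_nonneg (l1 - l3), sq_nonneg (l1 + l3), mul_nonneg hs hs, sq_nonneg l2, mul_nonneg (sub_nonneg.2 h12) (sub_nonneg.2 h23)]
end

section
/- Let k ∈ ℝ with k = 2/3, and let λ₁ ≤ λ₂ ≤ λ₃ with λ₁ + λ₂ + λ₃ = 0 and λ₁ + λ₃ ≥ 0. Then for all vectors a, c in a real inner product space, the quantity Ψ = [2λ₂(λ₃−λ₂) + k(λ₂−λ₃)²]‖a‖² + [2λ₂(λ₁−λ₂) + k(λ₂−λ₁)²]‖c‖² + 2k(λ₂−λ₁)(λ₂−λ₃)⟨a,c⟩ is nonnegative. -/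
open RealInnerProductSpace

theorem stmt_19 {V : Type*} [NormedAddCommGroup V] [InnerProductSpace ℝ V]
    (l1 l2 l3 : ℝ) (h12 : l1 ≤ l2) (h23 : l2 ≤ l3)
    (hsum : l1 + l2 + l3 = 0) (hpos : l1 + l3 ≥ 0) (a c : V) :
    (2 * l2 * (l3 - l2) + (2 / 3 : ℝ) * (l2 - l3) ^ 2) * ‖a‖ ^ 2 +
        (2 * l2 * (l1 - l2) + (2 / 3 : ℝ) * (l2 - l1) ^ 2) * ‖c‖ ^ 2 +
        2 * ((2 / 3 : ℝ) * (l2 - l1) * (l2 - l3)) * ⟪a, c⟫ ≥ 0 := by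
  have key : (2 * l2 * (l3 - l2) + (2 / 3 : ℝ) * (l2 - l3) ^ 2) * ‖a‖ ^ 2 +
        (2 * l2 * (l1 - l2) + (2 / 3 : ℝ) * (l2 - l1) ^ 2) * ‖c‖ ^ 2 +
        2 * ((2 / 3 : ℝ) * (l2 - l1) * (l2 - l3)) * ⟪a, c⟫
      = (2/3) * ((l2 - l1) * (l3 - l2)) * ‖a - c‖ ^ 2 := by
    rw [norm_sub_sq_real]
    have hl2 : l2 = -l1 - l3 := by linarith
    subst hl2
    ring
  rw [key]
  have h1 : (0:ℝ) ≤ (l2 - l1) * (l3 - l2) :=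
    mul_nonneg (by linarith) (by linarith)
  positivity
end
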